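/- arXiv:2410.13087 — 2 statements merged into one kernel-verified Lean document; each statement's English description precedes it below -/
import Mathlib

section
/- Let Ω = [a, b] ⊆ ℝⁿ be a closed rectangular box, T > 0, ε ∈ ℝ, d : ℝ → ℝ continuously differentiable with d ≥ 0, and S : Ω → ℝ continuous. Let φ : ℝ × ℝⁿ → ℝ be smooth on a neighborhood of [0, T] × Ω and set μ(t, x) = φ(t, x)³ − φ(t, x) − ε² Δ_x φ(t, x). Assume that for all t ∈ [0, T]: (i) ∂φ/∂t = div_x( d(φ) ∇_x μ ) + S on Ω; (ii) ∇_x φ(t, ·)·ν = 0 and ∇_x μ(t, ·)·ν = 0 on ∂Ω. Then the total energy H(t) = ∫_Ω [ F(φ(t, x)) + (ε²/2)‖∇_x φ(t, x)‖² ] dx is differentiable on (0, T) with H'(t) = − ∫_Ω d(φ(t, x)) ‖∇_x μ(t, x)‖² dx + ∫_Ω μ(t, x) S(x) dx; in particular, if S ≡ 0 then H'(t) ≤ 0 for all t ∈ (0, T), i.e. the energy is nonincreasing. -/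
open MeasureTheory

/-- `i`-th partial derivative of a scalar field on `ℝⁿ` (represented as `Fin n → ℝ`),
i.e. the `i`-th component of the gradient `∇f`. -/
noncomputable def pgrad {n : ℕ} (f : (Fin n → ℝ) → ℝ) (x : Fin n → ℝ) (i : Fin n) : ℝ :=
  fderiv ℝ f x (Pi.single i 1)

/-- Divergence of a vector field on `ℝⁿ` (represented as `Fin n → ℝ`),
computed as the sum of the partial derivatives of the components. -/
noncomputable def vdiv {n : ℕ} (v : (Fin n → ℝ) → (Fin n → ℝ)) (x : Fin n → ℝ) : ℝ :=
  ∑ i, fderiv ℝ v x (Pi.single i 1) i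

/-- Laplacian of a scalar field on `ℝⁿ`, as the sum of second partial derivatives. -/
noncomputable def lap {n : ℕ} (f : (Fin n → ℝ) → ℝ) (x : Fin n → ℝ) : ℝ :=
  ∑ i, fderiv ℝ (fun y => fderiv ℝ f y (Pi.single i 1)) x (Pi.single i 1)

/-- divergence theorem with vanishing normal component: integral of divergence is 0. -/
theorem integral_vdiv_eq_zero {n : ℕ} {a b : Fin n → ℝ} (hab : a ≤ b)
    {w : (Fin n → ℝ) → (Fin n → ℝ)} {U : Set (Fin n → ℝ)} (hU : IsOpen U)
    (hsub : Set.Icc a b ⊆ U) (hw : ContDiffOn ℝ 1 w U)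
    (hbc : ∀ i, ∀ x ∈ Set.Icc a b, (x i = a i ∨ x i = b i) → w x i = 0) :
    ∫ x in Set.Icc a b, vdiv w x = 0 := by
  cases n with
  | zero =>
      simp [vdiv]
  | succ m =>
      have hdiff : ∀ x ∈ U, HasFDerivAt w (fderiv ℝ w x) x := fun x hx =>
        ((hw.differentiableOn one_ne_zero).differentiableAt (hU.mem_nhds hx)).hasFDerivAt
      have hcont : ContinuousOn (fun x => fderiv ℝ w x) U :=
        ContDiffOn.continuousOn (𝕜 := ℝ) (n := 0) (hw.fderiv_of_isOpen hU (by norm_num))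
      have Hi : IntegrableOn (fun x => ∑ i, fderiv ℝ w x (Pi.single i 1) i)
          (Set.Icc a b) := by
        apply ContinuousOn.integrableOn_compact isCompact_Icc
        apply continuousOn_finset_sum
        intro i _
        have hc1 : ContinuousOn (fun x => fderiv ℝ w x (Pi.single i 1)) (Set.Icc a b) :=
          (hcont.mono hsub).clm_apply continuousOn_const
        exact (continuous_apply i).comp_continuousOn hc1
      have := MeasureTheory.integral_divergence_of_hasFDerivAt_off_countable
        (a := a) (b := b) hab w (fun x => fderiv ℝ w x) ∅ Set.countable_empty
        (hw.continuousOn.mono hsub)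
        (fun x hx => hdiff x (hsub ((Set.pi_univ_Ioo_subset a b).trans Set.Ioo_subset_Icc_self hx.1)))
        Hi
      have hface : ∀ (i : Fin (m+1)) (c : ℝ), (c = a i ∨ c = b i) →
          ∀ x ∈ Set.Icc (a ∘ i.succAbove) (b ∘ i.succAbove),
            w (i.insertNth c x) i = 0 := by
        intro i c hc x hx
        have hmem : i.insertNth c x ∈ Set.Icc a b := by
          rw [Fin.insertNth_mem_Icc]
          constructor
          · rcases hc with h | h <;> simp [h, Set.mem_Icc, hab i, le_refl]
          · exact hx
        exact hbc i _ hmem (by rcases hc with h | h <;> simp [h, Fin.insertNth_apply_same] <;> tauto)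
      simp only [vdiv]
      rw [this, Finset.sum_eq_zero]
      intro i _
      have h1 : ∫ x in Set.Icc (a ∘ i.succAbove) (b ∘ i.succAbove),
          w (i.insertNth (b i) x) i = 0 := by
        rw [MeasureTheory.setIntegral_congr_fun measurableSet_Icc
          (fun x hx => hface i (b i) (Or.inr rfl) x hx)]
        simp
      have h2 : ∫ x in Set.Icc (a ∘ i.succAbove) (b ∘ i.succAbove),
          w (i.insertNth (a i) x) i = 0 := by
        rw [MeasureTheory.setIntegral_congr_fun measurableSet_Icc
          (fun x hx => hface i (a i) (Or.inl rfl) x hx)]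
        simp
      rw [h1, h2, sub_zero]

theorem hasDerivAt_param_integral {n : ℕ} {a b : Fin n → ℝ}
    {g g' : ℝ × (Fin n → ℝ) → ℝ} {U : Set (ℝ × (Fin n → ℝ))} (hU : IsOpen U)
    (hg : ContinuousOn g U) (hg' : ContinuousOn g' U)
    (hd : ∀ p ∈ U, HasDerivAt (fun s => g (s, p.2)) (g' p) p.1)
    {t : ℝ} (ht : {t} ×ˢ Set.Icc a b ⊆ U) :
    HasDerivAt (fun s => ∫ x in Set.Icc a b, g (s, x))
      (∫ x in Set.Icc a b, g' (t, x)) t := by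
  obtain ⟨u, v, hu, hv, htu, hbv, huv⟩ :=
    generalized_tube_lemma isCompact_singleton isCompact_Icc hU ht
  obtain ⟨δ, hδ, hball⟩ := Metric.isOpen_iff.1 hu t (htu rfl)
  set δ' := δ / 2 with hδ'
  have hδ'0 : 0 < δ' := by positivity
  have hKsub : Metric.closedBall t δ' ×ˢ Set.Icc a b ⊆ U := by
    refine (Set.prod_mono ?_ hbv).trans huv
    exact (Metric.closedBall_subset_ball (by linarith)).trans hball
  have hK : IsCompact (Metric.closedBall t δ' ×ˢ Set.Icc a b) :=
    (isCompact_closedBall t δ').prod isCompact_Icc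
  obtain ⟨C, hC⟩ := hK.exists_bound_of_continuousOn (hg'.mono hKsub)
  have hslice : ∀ s ∈ Metric.closedBall t δ',
      ContinuousOn (fun x => g (s, x)) (Set.Icc a b) := by
    intro s hs
    exact hg.comp ((continuous_const.prodMk continuous_id).continuousOn)
      (fun x hx => hKsub ⟨hs, hx⟩)
  have hslice' : ContinuousOn (fun x => g' (t, x)) (Set.Icc a b) := by
    exact hg'.comp ((continuous_const.prodMk continuous_id).continuousOn)
      (fun x hx => hKsub ⟨Metric.mem_closedBall_self hδ'0.le, hx⟩)
  haveI : IsFiniteMeasure (volume.restrict (Set.Icc a b)) :=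
    ⟨by rw [Measure.restrict_apply_univ]; exact isCompact_Icc.measure_lt_top⟩
  have main := hasDerivAt_integral_of_dominated_loc_of_deriv_le
    (μ := volume.restrict (Set.Icc a b)) (x₀ := t)
    (F := fun s x => g (s, x)) (F' := fun s x => g' (s, x))
    (bound := fun _ => C) (Metric.ball_mem_nhds t hδ'0)
    ?meas ?int ?meas' ?bound ?bint ?diff
  · exact main.2
  case meas =>
    filter_upwards [Metric.closedBall_mem_nhds t hδ'0] with s hs
    exact (hslice s hs).aestronglyMeasurable measurableSet_Icc
  case int =>
    exact (hslice t (Metric.mem_closedBall_self hδ'0.le)).integrableOn_compact isCompact_Icc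
  case meas' =>
    exact hslice'.aestronglyMeasurable measurableSet_Icc
  case bound =>
    filter_upwards [ae_restrict_mem measurableSet_Icc] with x hx
    intro s hs
    exact hC (s, x) ⟨Metric.ball_subset_closedBall hs, hx⟩
  case bint =>
    exact integrable_const _
  case diff =>
    filter_upwards [ae_restrict_mem measurableSet_Icc] with x hx
    intro s hs
    exact hd (s, x) (hKsub ⟨Metric.ball_subset_closedBall hs, hx⟩)

noncomputable def pt {n : ℕ} (f : ℝ × (Fin n → ℝ) → ℝ) (p : ℝ × (Fin n → ℝ)) : ℝ :=
  fderiv ℝ f p (1, 0)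

noncomputable def px {n : ℕ} (f : ℝ × (Fin n → ℝ) → ℝ) (i : Fin n)
    (p : ℝ × (Fin n → ℝ)) : ℝ :=
  fderiv ℝ f p (0, Pi.single i 1)

theorem contDiffOn_fderiv_apply {E F : Type*} [NormedAddCommGroup E] [NormedSpace ℝ E]
    [NormedAddCommGroup F] [NormedSpace ℝ F] {f : E → F} {V : Set E} {m : ℕ}
    (hf : ContDiffOn ℝ (m + 1 : ℕ) f V) (hV : IsOpen V) (v : E) :
    ContDiffOn ℝ (m : ℕ) (fun p => fderiv ℝ f p v) V := by
  refine ContDiffOn.clm_apply ?_ contDiffOn_const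
  exact hf.fderiv_of_isOpen hV (by exact_mod_cast le_rfl)

theorem hasFDerivAt_of_contDiffOn {E F : Type*} [NormedAddCommGroup E] [NormedSpace ℝ E]
    [NormedAddCommGroup F] [NormedSpace ℝ F] {f : E → F} {V : Set E}
    (hf : ContDiffOn ℝ 1 f V) (hV : IsOpen V) {p : E} (hp : p ∈ V) :
    HasFDerivAt f (fderiv ℝ f p) p :=
  ((hf.differentiableOn one_ne_zero).differentiableAt (hV.mem_nhds hp)).hasFDerivAt

theorem fderiv_slice {n : ℕ} {f : ℝ × (Fin n → ℝ) → ℝ} {V : Set (ℝ × (Fin n → ℝ))}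
    (hf : ContDiffOn ℝ 1 f V) (hV : IsOpen V) {t : ℝ} {x : Fin n → ℝ}
    (h : (t, x) ∈ V) (v : Fin n → ℝ) :
    fderiv ℝ (fun y => f (t, y)) x v = fderiv ℝ f (t, x) (0, v) := by
  have hL := hasFDerivAt_of_contDiffOn hf hV h
  have hinner : HasFDerivAt (fun y : Fin n → ℝ => (t, y))
      ((0 : (Fin n → ℝ) →L[ℝ] ℝ).prod (ContinuousLinearMap.id ℝ (Fin n → ℝ))) x :=
    (hasFDerivAt_const t x).prodMk (hasFDerivAt_id x)
  have := (hL.comp x hinner).fderiv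
  rw [show (fun y : Fin n → ℝ => f (t, y)) = f ∘ (fun y => (t, y)) from rfl, this]
  rfl

theorem hasDerivAt_slice {n : ℕ} {f : ℝ × (Fin n → ℝ) → ℝ} {V : Set (ℝ × (Fin n → ℝ))}
    (hf : ContDiffOn ℝ 1 f V) (hV : IsOpen V) {t : ℝ} {x : Fin n → ℝ}
    (h : (t, x) ∈ V) :
    HasDerivAt (fun s => f (s, x)) (pt f (t, x)) t := by
  have hL := hasFDerivAt_of_contDiffOn hf hV h
  have hinner : HasDerivAt (fun s : ℝ => (s, x)) ((1 : ℝ), (0 : Fin n → ℝ)) t :=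
    (hasDerivAt_id t).prodMk (hasDerivAt_const t x)
  exact hL.comp_hasDerivAt t hinner

theorem pt_px_comm {n : ℕ} {f : ℝ × (Fin n → ℝ) → ℝ} {V : Set (ℝ × (Fin n → ℝ))}
    (hf : ContDiffOn ℝ 2 f V) (hV : IsOpen V) {p : ℝ × (Fin n → ℝ)}
    (hp : p ∈ V) (i : Fin n) :
    pt (px f i) p = px (pt f) i p := by
  have hg : ContDiffOn ℝ 1 (fderiv ℝ f) V := hf.fderiv_of_isOpen hV (by norm_num)
  have hB : HasFDerivAt (fderiv ℝ f) (fderiv ℝ (fderiv ℝ f) p) p :=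
    hasFDerivAt_of_contDiffOn hg hV hp
  have hev : ∀ᶠ q in nhds p, HasFDerivAt f (fderiv ℝ f q) q := by
    filter_upwards [hV.mem_nhds hp] with q hq
    exact hasFDerivAt_of_contDiffOn (hf.of_le (by norm_num)) hV hq
  have hsymm := second_derivative_symmetric_of_eventually hev hB
  have happ : ∀ v : ℝ × (Fin n → ℝ),
      fderiv ℝ (fun q => fderiv ℝ f q v) p = ((fderiv ℝ (fderiv ℝ f) p).flip v) := by
    intro v
    have : HasFDerivAt (fun q => fderiv ℝ f q v)
        ((ContinuousLinearMap.apply ℝ ℝ v).comp (fderiv ℝ (fderiv ℝ f) p)) p :=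
      (ContinuousLinearMap.apply ℝ ℝ v).hasFDerivAt.comp p hB
    rw [this.fderiv]; rfl
  show fderiv ℝ (fun q => fderiv ℝ f q (0, Pi.single i 1)) p (1, 0)
      = fderiv ℝ (fun q => fderiv ℝ f q (1, 0)) p (0, Pi.single i 1)
  rw [happ, happ]
  simp only [ContinuousLinearMap.flip_apply]
  exact hsymm (1, 0) (0, Pi.single i 1)

theorem hasDerivAt_px_slice {n : ℕ} {f : ℝ × (Fin n → ℝ) → ℝ} {V : Set (ℝ × (Fin n → ℝ))}
    (hf : ContDiffOn ℝ 2 f V) (hV : IsOpen V) {t : ℝ} {x : Fin n → ℝ}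
    (h : (t, x) ∈ V) (i : Fin n) :
    HasDerivAt (fun s => px f i (s, x)) (px (pt f) i (t, x)) t := by
  have h1 : ContDiffOn ℝ 1 (px f i) V := by
    have := contDiffOn_fderiv_apply (m := 1) (by exact_mod_cast hf) hV (0, Pi.single i 1)
    exact_mod_cast this
  have := hasDerivAt_slice h1 hV h
  rwa [pt_px_comm hf hV h] at this

theorem vdiv_eq_sum {n : ℕ} {w : (Fin n → ℝ) → (Fin n → ℝ)} {x : Fin n → ℝ}
    (hw : DifferentiableAt ℝ w x) :
    vdiv w x = ∑ i, fderiv ℝ (fun y => w y i) x (Pi.single i 1) := by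
  unfold vdiv
  refine Finset.sum_congr rfl fun i _ => ?_
  have h2 := ((ContinuousLinearMap.proj (R := ℝ) (φ := fun _ : Fin n => ℝ)
    i).hasFDerivAt.comp x hw.hasFDerivAt).fderiv
  have h3 : fderiv ℝ (fun y => w y i) x
      = (ContinuousLinearMap.proj i).comp (fderiv ℝ w x) := by
    simpa [Function.comp_def] using h2
  rw [h3]; rfl

theorem fderiv_mul_apply' {E : Type*} [NormedAddCommGroup E] [NormedSpace ℝ E]
    {A B : E → ℝ} {y : E} (hA : DifferentiableAt ℝ A y) (hB : DifferentiableAt ℝ B y)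
    (v : E) :
    fderiv ℝ (fun z => A z * B z) y v = A y * fderiv ℝ B y v + B y * fderiv ℝ A y v := by
  rw [fderiv_fun_mul hA hB]
  simp

theorem continuousOn_vdiv {n : ℕ} {w : (Fin n → ℝ) → (Fin n → ℝ)} {U : Set (Fin n → ℝ)}
    (hU : IsOpen U) (hw : ContDiffOn ℝ 1 w U) : ContinuousOn (vdiv w) U := by
  unfold vdiv
  refine continuousOn_finset_sum _ fun i _ => ?_
  have hcont : ContinuousOn (fun x => fderiv ℝ w x) U :=
    ContDiffOn.continuousOn (𝕜 := ℝ) (n := 0) (hw.fderiv_of_isOpen hU (by norm_num))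
  exact (continuous_apply i).comp_continuousOn (hcont.clm_apply continuousOn_const)

theorem diffAt_of_contDiffOn {E F : Type*} [NormedAddCommGroup E] [NormedSpace ℝ E]
    [NormedAddCommGroup F] [NormedSpace ℝ F] {f : E → F} {V : Set E}
    (hf : ContDiffOn ℝ 1 f V) (hV : IsOpen V) {p : E} (hp : p ∈ V) :
    DifferentiableAt ℝ f p :=
  (hf.differentiableOn one_ne_zero).differentiableAt (hV.mem_nhds hp)

/-- **Energy dissipation for the Cahn–Hilliard equation.**
On the box `Ω = [a, b]`, for a smooth solution `φ` of
`∂φ/∂t = div(d(φ)∇μ) + S` with `μ = φ³ − φ − ε²Δφ` and homogeneous Neumann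
conditions for `φ` and `μ`, the total energy
`H(t) = ∫_Ω [F(φ) + (ε²/2)‖∇φ‖²]` (with `F(s) = ¼(1 − s²)²`) is differentiable
on `(0, T)` with `H'(t) = −∫_Ω d(φ)‖∇μ‖² + ∫_Ω μ S`; in particular it is
nonincreasing when `S ≡ 0`. -/
theorem stmt_5 (n : ℕ) (a b : Fin n → ℝ) (hab : ∀ i, a i < b i)
    (T : ℝ) (hT : 0 < T) (ε : ℝ)
    (d : ℝ → ℝ) (hd : ContDiff ℝ 1 d) (hd0 : ∀ s, 0 ≤ d s)
    (S : (Fin n → ℝ) → ℝ) (hS : ContinuousOn S (Set.Icc a b))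
    (φ : ℝ × (Fin n → ℝ) → ℝ) (V : Set (ℝ × (Fin n → ℝ))) (hV : IsOpen V)
    (hTV : Set.Icc (0 : ℝ) T ×ˢ Set.Icc a b ⊆ V) (hφ : ContDiffOn ℝ (⊤ : ℕ∞) φ V)
    (μ : ℝ → (Fin n → ℝ) → ℝ)
    (hμ : ∀ t x, μ t x = (φ (t, x))^3 - φ (t, x) - ε^2 * lap (fun y => φ (t, y)) x)
    (hpde : ∀ t ∈ Set.Icc (0 : ℝ) T, ∀ x ∈ Set.Icc a b,
      deriv (fun s => φ (s, x)) t
        = vdiv (fun y => d (φ (t, y)) • fun i => pgrad (μ t) y i) x + S x)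
    (hbcφ : ∀ t ∈ Set.Icc (0 : ℝ) T, ∀ i : Fin n, ∀ x ∈ Set.Icc a b,
      (x i = a i ∨ x i = b i) → pgrad (fun y => φ (t, y)) x i = 0)
    (hbcμ : ∀ t ∈ Set.Icc (0 : ℝ) T, ∀ i : Fin n, ∀ x ∈ Set.Icc a b,
      (x i = a i ∨ x i = b i) → pgrad (μ t) x i = 0) :
    ∀ t ∈ Set.Ioo (0 : ℝ) T,
      HasDerivAt
        (fun s => ∫ x in Set.Icc a b,
          ((1/4) * (1 - (φ (s, x))^2)^2
            + ε^2/2 * ∑ i, (pgrad (fun y => φ (s, y)) x i)^2))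
        ((-∫ x in Set.Icc a b, d (φ (t, x)) * ∑ i, (pgrad (μ t) x i)^2)
          + ∫ x in Set.Icc a b, μ t x * S x) t
      ∧ ((∀ x, S x = 0) →
          (-∫ x in Set.Icc a b, d (φ (t, x)) * ∑ i, (pgrad (μ t) x i)^2)
            + (∫ x in Set.Icc a b, μ t x * S x) ≤ 0) := by
  intro t ht
  have htI : t ∈ Set.Icc (0:ℝ) T := ⟨ht.1.le, ht.2.le⟩
  have hab' : a ≤ b := fun i => (hab i).le
  -- the easy second part
  refine ⟨?_, ?_⟩; swap
  · intro hS0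
    have h2 : (∫ x in Set.Icc a b, μ t x * S x) = 0 := by
      simp [hS0]
    rw [h2, add_zero, neg_nonpos]
    refine MeasureTheory.setIntegral_nonneg measurableSet_Icc fun x _ => ?_
    exact mul_nonneg (hd0 _) (Finset.sum_nonneg fun i _ => sq_nonneg _)
  -- smoothness bookkeeping
  have hφ4 : ContDiffOn ℝ 4 φ V := hφ.of_le (WithTop.coe_le_coe.mpr le_top)
  have hφ3 : ContDiffOn ℝ 3 φ V := hφ.of_le (WithTop.coe_le_coe.mpr le_top)
  have hφ2 : ContDiffOn ℝ 2 φ V := hφ.of_le (WithTop.coe_le_coe.mpr le_top)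
  have hφ1 : ContDiffOn ℝ 1 φ V := hφ.of_le (by simp)
  have hpt3 : ContDiffOn ℝ 3 (pt φ) V := by
    exact_mod_cast contDiffOn_fderiv_apply (m := 3) (by exact_mod_cast hφ4) hV (1, 0)
  have hpt1 : ContDiffOn ℝ 1 (pt φ) V := hpt3.of_le (by norm_num)
  have hxi3 : ∀ i, ContDiffOn ℝ 3 (px φ i) V := fun i => by
    exact_mod_cast contDiffOn_fderiv_apply (m := 3) (by exact_mod_cast hφ4) hV
      (0, Pi.single i 1)
  have hxii2 : ∀ i, ContDiffOn ℝ 2 (px (px φ i) i) V := fun i => by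
    exact_mod_cast contDiffOn_fderiv_apply (m := 2) (by exact_mod_cast hxi3 i) hV
      (0, Pi.single i 1)
  have hpxpt2 : ∀ i, ContDiffOn ℝ 2 (px (pt φ) i) V := fun i => by
    exact_mod_cast contDiffOn_fderiv_apply (m := 2) (by exact_mod_cast hpt3) hV
      (0, Pi.single i 1)
  -- the chemical potential as a smooth function on `V`
  set ψ : ℝ × (Fin n → ℝ) → ℝ :=
    fun p => (φ p)^3 - φ p - ε^2 * ∑ i, px (px φ i) i p with hψdef
  have hψ2 : ContDiffOn ℝ 2 ψ V := by
    refine ContDiffOn.sub (ContDiffOn.sub ((hφ2.pow 3)) hφ2) (ContDiffOn.mul contDiffOn_const ?_)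
    exact ContDiffOn.sum fun i _ => hxii2 i
  have hpxψ1 : ∀ i, ContDiffOn ℝ 1 (px ψ i) V := fun i => by
    exact_mod_cast contDiffOn_fderiv_apply (m := 1) (by exact_mod_cast hψ2) hV
      (0, Pi.single i 1)
  -- slice at time t
  set Ut : Set (Fin n → ℝ) := {y | (t, y) ∈ V} with hUtdef
  have hUt : IsOpen Ut := hV.preimage (continuous_const.prodMk continuous_id)
  have hΩUt : Set.Icc a b ⊆ Ut := fun y hy => hTV ⟨htI, hy⟩
  have hslice : ∀ (k : WithTop ℕ∞) (f : ℝ × (Fin n → ℝ) → ℝ), ContDiffOn ℝ k f V →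
      ContDiffOn ℝ k (fun y => f (t, y)) Ut := by
    intro k f hf
    exact hf.comp ((contDiff_const.prodMk contDiff_id).contDiffOn) (fun y hy => hy)
  -- the energy density and its time derivative
  set G : ℝ × (Fin n → ℝ) → ℝ :=
    fun p => 1/4 * (1 - (φ p)^2)^2 + ε^2/2 * ∑ i, (px φ i p)^2 with hGdef
  set G' : ℝ × (Fin n → ℝ) → ℝ :=
    fun p => ((φ p)^3 - φ p) * pt φ p + ε^2 * ∑ i, px φ i p * px (pt φ) i p with hG'def
  have hGcont : ContinuousOn G V := by
    refine ContinuousOn.add (ContinuousOn.mul continuousOn_const ?_)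
      (ContinuousOn.mul continuousOn_const ?_)
    · exact ((continuousOn_const.sub (hφ1.continuousOn.pow 2)).pow 2)
    · exact continuousOn_finset_sum _ fun i _ => ((hxi3 i).continuousOn.pow 2)
  have hG'cont : ContinuousOn G' V := by
    refine ContinuousOn.add
      (ContinuousOn.mul ((hφ1.continuousOn.pow 3).sub hφ1.continuousOn) hpt1.continuousOn)
      (ContinuousOn.mul continuousOn_const ?_)
    exact continuousOn_finset_sum _ fun i _ =>
      (hxi3 i).continuousOn.mul (hpxpt2 i).continuousOn
  have hGd : ∀ p ∈ V, HasDerivAt (fun s => G (s, p.2)) (G' p) p.1 := by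
    rintro ⟨s, x⟩ hp
    have hu : HasDerivAt (fun s' => φ (s', x)) (pt φ (s, x)) s := hasDerivAt_slice hφ1 hV hp
    have hxi : ∀ i, HasDerivAt (fun s' => px φ i (s', x)) (px (pt φ) i (s, x)) s :=
      fun i => hasDerivAt_px_slice hφ2 hV hp i
    have h1 := (((hu.fun_pow 2).const_sub 1).fun_pow 2).const_mul (1/4 : ℝ)
    have h2 := (HasDerivAt.fun_sum (fun i (_ : i ∈ Finset.univ) => (hxi i).fun_pow 2)).const_mul
      (ε^2/2)
    have h12 := h1.fun_add h2
    convert h12 using 1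
    · rfl
    · rfl
    simp only [hG'def, Finset.mul_sum, show (2-1 : ℕ) = 1 from rfl, pow_one]
    congr 1
    · push_cast; ring
    · exact Finset.sum_congr rfl fun i _ => by push_cast; ring
  have hder0 : HasDerivAt (fun s => ∫ x in Set.Icc a b, G (s, x))
      (∫ x in Set.Icc a b, G' (t, x)) t := by
    refine hasDerivAt_param_integral hV hGcont hG'cont hGd ?_
    rintro ⟨s, x⟩ ⟨hs, hx⟩
    rcases hs with rfl
    exact hTV ⟨htI, hx⟩
  have hpgrad_slice : ∀ s x, (s, x) ∈ V → ∀ i,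
      pgrad (fun y => φ (s, y)) x i = px φ i (s, x) := by
    intro s x hsx i
    exact fderiv_slice hφ1 hV hsx (Pi.single i 1)
  have hder : HasDerivAt
      (fun s => ∫ x in Set.Icc a b,
        ((1/4) * (1 - (φ (s, x))^2)^2
          + ε^2/2 * ∑ i, (pgrad (fun y => φ (s, y)) x i)^2))
      (∫ x in Set.Icc a b, G' (t, x)) t := by
    refine hder0.congr_of_eventuallyEq ?_
    filter_upwards [Ioo_mem_nhds ht.1 ht.2] with s hs
    refine MeasureTheory.setIntegral_congr_fun measurableSet_Icc fun x hx => ?_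
    have hsV : (s, x) ∈ V := hTV ⟨⟨hs.1.le, hs.2.le⟩, hx⟩
    simp only [hGdef, hpgrad_slice s x hsV]
  -- key integral identity
  have key : (∫ x in Set.Icc a b, G' (t, x))
      = (-∫ x in Set.Icc a b, d (φ (t, x)) * ∑ i, (pgrad (μ t) x i)^2)
        + ∫ x in Set.Icc a b, μ t x * S x := by
    have hψ1 : ContDiffOn ℝ 1 ψ V := hψ2.of_le one_le_two
    have hxi1 : ∀ i, ContDiffOn ℝ 1 (px φ i) V := fun i => (hxi3 i).of_le (by norm_num)
    have hxii1 : ∀ i, ContDiffOn ℝ 1 (px (px φ i) i) V := fun i => (hxii2 i).of_le one_le_two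
    have hpxpt1 : ∀ i, ContDiffOn ℝ 1 (px (pt φ) i) V := fun i => (hpxpt2 i).of_le one_le_two
    -- the Laplacian of the slice
    have hlap : ∀ y ∈ Ut, lap (fun z => φ (t, z)) y = ∑ i, px (px φ i) i (t, y) := by
      intro y hy
      unfold lap
      refine Finset.sum_congr rfl fun i _ => ?_
      have hev : (fun z => fderiv ℝ (fun y' => φ (t, y')) z (Pi.single i 1))
          =ᶠ[nhds y] (fun z => px φ i (t, z)) := by
        filter_upwards [hUt.mem_nhds hy] with z hz
        exact fderiv_slice hφ1 hV hz (Pi.single i 1)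
      rw [Filter.EventuallyEq.fderiv_eq hev]
      exact fderiv_slice (hxi1 i) hV hy (Pi.single i 1)
    have hμψ : ∀ y ∈ Ut, μ t y = ψ (t, y) := by
      intro y hy
      rw [hμ t y, hlap y hy, hψdef]
    have hpgradμ : ∀ y ∈ Ut, ∀ i, pgrad (μ t) y i = px ψ i (t, y) := by
      intro y hy i
      have hev : μ t =ᶠ[nhds y] (fun z => ψ (t, z)) := by
        filter_upwards [hUt.mem_nhds hy] with z hz
        exact hμψ z hz
      show fderiv ℝ (μ t) y (Pi.single i 1) = _
      rw [Filter.EventuallyEq.fderiv_eq hev]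
      exact fderiv_slice hψ1 hV hy (Pi.single i 1)
    -- PDE in terms of pt
    set wd : (Fin n → ℝ) → (Fin n → ℝ) :=
      fun y => d (φ (t, y)) • fun i => pgrad (μ t) y i with hwddef
    set wd' : (Fin n → ℝ) → (Fin n → ℝ) :=
      fun y i => d (φ (t, y)) * px ψ i (t, y) with hwd'def
    have hwd'1 : ContDiffOn ℝ 1 wd' Ut := by
      rw [contDiffOn_pi]
      intro i
      exact (hd.comp_contDiffOn (hslice 1 φ hφ1)).mul (hslice 1 (px ψ i) (hpxψ1 i))
    have hwdeq : ∀ y ∈ Ut, wd y = wd' y := by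
      intro y hy
      funext i
      simp only [hwddef, hwd'def, Pi.smul_apply, smul_eq_mul, hpgradμ y hy i]
    have hvdivwd : ∀ y ∈ Ut, vdiv wd y = vdiv wd' y := by
      intro y hy
      have hev : wd =ᶠ[nhds y] wd' := by
        filter_upwards [hUt.mem_nhds hy] with z hz
        exact hwdeq z hz
      unfold vdiv
      rw [Filter.EventuallyEq.fderiv_eq hev]
    have hpt_eq : ∀ x ∈ Set.Icc a b, pt φ (t, x) = vdiv wd' x + S x := by
      intro x hx
      have h1 := (hasDerivAt_slice hφ1 hV (hTV ⟨htI, hx⟩)).deriv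
      rw [← h1, hpde t htI x hx, hvdivwd x (hΩUt hx)]
    -- first divergence identity
    set w1 : (Fin n → ℝ) → (Fin n → ℝ) :=
      fun y i => pt φ (t, y) * px φ i (t, y) with hw1def
    have hw11 : ContDiffOn ℝ 1 w1 Ut := by
      rw [contDiffOn_pi]
      intro i
      exact (hslice 1 (pt φ) hpt1).mul (hslice 1 (px φ i) (hxi1 i))
    have hdiv1 : ∫ x in Set.Icc a b, vdiv w1 x = 0 := by
      refine integral_vdiv_eq_zero hab' hUt hΩUt hw11 ?_
      intro i x hx hface
      have : px φ i (t, x) = 0 := by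
        rw [← hpgrad_slice t x (hTV ⟨htI, hx⟩) i]
        exact hbcφ t htI i x hx hface
      simp [hw1def, this]
    have hvdivw1 : ∀ y ∈ Ut, vdiv w1 y
        = pt φ (t, y) * ∑ i, px (px φ i) i (t, y)
          + ∑ i, px φ i (t, y) * px (pt φ) i (t, y) := by
      intro y hy
      have hdA : DifferentiableAt ℝ (fun z => pt φ (t, z)) y :=
        diffAt_of_contDiffOn (hslice 1 (pt φ) hpt1) hUt hy
      have hw1diff : DifferentiableAt ℝ w1 y :=
        diffAt_of_contDiffOn hw11 hUt hy
      rw [vdiv_eq_sum hw1diff]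
      have : ∀ i, fderiv ℝ (fun z => w1 z i) y (Pi.single i 1)
          = pt φ (t, y) * px (px φ i) i (t, y) + px φ i (t, y) * px (pt φ) i (t, y) := by
        intro i
        have hdB : DifferentiableAt ℝ (fun z => px φ i (t, z)) y :=
          diffAt_of_contDiffOn (hslice 1 (px φ i) (hxi1 i)) hUt hy
        have := fderiv_mul_apply' hdA hdB (Pi.single i 1)
        simp only [hw1def]
        rw [this, fderiv_slice (hxi1 i) hV hy, fderiv_slice hpt1 hV hy]
        rfl
      rw [Finset.sum_congr rfl fun i _ => this i, Finset.sum_add_distrib, Finset.mul_sum]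
    -- second divergence identity
    set w2 : (Fin n → ℝ) → (Fin n → ℝ) :=
      fun y i => ψ (t, y) * wd' y i with hw2def
    have hw21 : ContDiffOn ℝ 1 w2 Ut := by
      rw [contDiffOn_pi]
      intro i
      refine (hslice 1 ψ hψ1).mul ?_
      exact (hd.comp_contDiffOn (hslice 1 φ hφ1)).mul (hslice 1 (px ψ i) (hpxψ1 i))
    have hdiv2 : ∫ x in Set.Icc a b, vdiv w2 x = 0 := by
      refine integral_vdiv_eq_zero hab' hUt hΩUt hw21 ?_
      intro i x hx hface
      have : px ψ i (t, x) = 0 := by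
        rw [← hpgradμ x (hΩUt hx) i]
        exact hbcμ t htI i x hx hface
      simp [hw2def, hwd'def, this]
    have hvdivw2 : ∀ y ∈ Ut, vdiv w2 y
        = ψ (t, y) * vdiv wd' y
          + ∑ i, wd' y i * px ψ i (t, y) := by
      intro y hy
      have hdA : DifferentiableAt ℝ (fun z => ψ (t, z)) y :=
        diffAt_of_contDiffOn (hslice 1 ψ hψ1) hUt hy
      have hw2diff : DifferentiableAt ℝ w2 y :=
        diffAt_of_contDiffOn hw21 hUt hy
      have hwd'diff : DifferentiableAt ℝ wd' y :=
        diffAt_of_contDiffOn hwd'1 hUt hy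
      rw [vdiv_eq_sum hw2diff, vdiv_eq_sum hwd'diff]
      have : ∀ i, fderiv ℝ (fun z => w2 z i) y (Pi.single i 1)
          = ψ (t, y) * fderiv ℝ (fun z => wd' z i) y (Pi.single i 1)
            + wd' y i * px ψ i (t, y) := by
        intro i
        have hdB : DifferentiableAt ℝ (fun z => wd' z i) y := by
          have := hwd'diff
          exact ((ContinuousLinearMap.proj i).differentiable.differentiableAt).comp y this
        have := fderiv_mul_apply' hdA hdB (Pi.single i 1)
        simp only [hw2def]
        rw [this, fderiv_slice hψ1 hV hy]
        rfl
      rw [Finset.sum_congr rfl fun i _ => this i, Finset.sum_add_distrib, Finset.mul_sum]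
    -- continuity and integrability of all integrands
    have hcs : ∀ (f : ℝ × (Fin n → ℝ) → ℝ), ContDiffOn ℝ 1 f V →
        ContinuousOn (fun y => f (t, y)) (Set.Icc a b) := fun f hf =>
      (hslice 1 f hf).continuousOn.mono hΩUt
    have if1 : IntegrableOn (fun x => (φ (t, x)^3 - φ (t, x)) * pt φ (t, x))
        (Set.Icc a b) := by
      refine ContinuousOn.integrableOn_compact isCompact_Icc ?_
      exact (((hcs φ hφ1).pow 3).sub (hcs φ hφ1)).mul (hcs (pt φ) hpt1)
    have if2 : IntegrableOn (fun x => ∑ i, px φ i (t, x) * px (pt φ) i (t, x))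
        (Set.Icc a b) := by
      refine ContinuousOn.integrableOn_compact isCompact_Icc ?_
      exact continuousOn_finset_sum _ fun i _ =>
        (hcs (px φ i) (hxi1 i)).mul (hcs (px (pt φ) i) (hpxpt1 i))
    have if3 : IntegrableOn (fun x => pt φ (t, x) * ∑ i, px (px φ i) i (t, x))
        (Set.Icc a b) := by
      refine ContinuousOn.integrableOn_compact isCompact_Icc ?_
      exact (hcs (pt φ) hpt1).mul
        (continuousOn_finset_sum _ fun i _ => hcs (px (px φ i) i) (hxii1 i))
    have cwd' : ∀ i, ContinuousOn (fun x => wd' x i) (Set.Icc a b) := by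
      intro i
      refine ContinuousOn.mul ?_ (hcs (px ψ i) (hpxψ1 i))
      exact hd.continuous.comp_continuousOn (hcs φ hφ1)
    have ig5 : IntegrableOn (fun x => ∑ i, wd' x i * px ψ i (t, x)) (Set.Icc a b) := by
      refine ContinuousOn.integrableOn_compact isCompact_Icc ?_
      exact continuousOn_finset_sum _ fun i _ => (cwd' i).mul (hcs (px ψ i) (hpxψ1 i))
    have ih6 : IntegrableOn (fun x => ψ (t, x) * vdiv wd' x) (Set.Icc a b) := by
      refine ContinuousOn.integrableOn_compact isCompact_Icc ?_
      exact (hcs ψ hψ1).mul ((continuousOn_vdiv hUt hwd'1).mono hΩUt)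
    have ih7 : IntegrableOn (fun x => ψ (t, x) * S x) (Set.Icc a b) := by
      refine ContinuousOn.integrableOn_compact isCompact_Icc ?_
      exact (hcs ψ hψ1).mul hS
    -- assembling the integral identities
    have e1 : (∫ x in Set.Icc a b, G' (t, x))
        = (∫ x in Set.Icc a b, (φ (t, x)^3 - φ (t, x)) * pt φ (t, x))
          + ε^2 * ∫ x in Set.Icc a b, ∑ i, px φ i (t, x) * px (pt φ) i (t, x) := by
      rw [← MeasureTheory.integral_const_mul, ← MeasureTheory.integral_add if1 (if2.const_mul _)]
    have e2 : (∫ x in Set.Icc a b, ∑ i, px φ i (t, x) * px (pt φ) i (t, x))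
        = - ∫ x in Set.Icc a b, pt φ (t, x) * ∑ i, px (px φ i) i (t, x) := by
      have h0 : ∫ x in Set.Icc a b, vdiv w1 x
          = (∫ x in Set.Icc a b, pt φ (t, x) * ∑ i, px (px φ i) i (t, x))
            + ∫ x in Set.Icc a b, ∑ i, px φ i (t, x) * px (pt φ) i (t, x) := by
        rw [MeasureTheory.setIntegral_congr_fun measurableSet_Icc
          (fun x hx => hvdivw1 x (hΩUt hx)), MeasureTheory.integral_add if3 if2]
      rw [hdiv1] at h0
      linarith
    have e3 : (∫ x in Set.Icc a b, (φ (t, x)^3 - φ (t, x)) * pt φ (t, x))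
          - ε^2 * (∫ x in Set.Icc a b, pt φ (t, x) * ∑ i, px (px φ i) i (t, x))
        = ∫ x in Set.Icc a b, ψ (t, x) * pt φ (t, x) := by
      rw [← MeasureTheory.integral_const_mul, ← MeasureTheory.integral_sub if1 (if3.const_mul _)]
      refine MeasureTheory.setIntegral_congr_fun measurableSet_Icc fun x hx => ?_
      simp only [hψdef]
      ring
    have e4 : (∫ x in Set.Icc a b, ψ (t, x) * pt φ (t, x))
        = (∫ x in Set.Icc a b, ψ (t, x) * vdiv wd' x)
          + ∫ x in Set.Icc a b, ψ (t, x) * S x := by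
      rw [← MeasureTheory.integral_add ih6 ih7]
      refine MeasureTheory.setIntegral_congr_fun measurableSet_Icc fun x hx => ?_
      rw [hpt_eq x hx]
      ring
    have e5 : (∫ x in Set.Icc a b, ψ (t, x) * vdiv wd' x)
        = - ∫ x in Set.Icc a b, ∑ i, wd' x i * px ψ i (t, x) := by
      have h0 : ∫ x in Set.Icc a b, vdiv w2 x
          = (∫ x in Set.Icc a b, ψ (t, x) * vdiv wd' x)
            + ∫ x in Set.Icc a b, ∑ i, wd' x i * px ψ i (t, x) := by
        rw [MeasureTheory.setIntegral_congr_fun measurableSet_Icc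
          (fun x hx => hvdivw2 x (hΩUt hx)), MeasureTheory.integral_add ih6 ig5]
      rw [hdiv2] at h0
      linarith
    have e6 : (∫ x in Set.Icc a b, ∑ i, wd' x i * px ψ i (t, x))
        = ∫ x in Set.Icc a b, d (φ (t, x)) * ∑ i, (pgrad (μ t) x i)^2 := by
      refine MeasureTheory.setIntegral_congr_fun measurableSet_Icc fun x hx => ?_
      rw [Finset.mul_sum]
      refine Finset.sum_congr rfl fun i _ => ?_
      simp only [hwd'def, hpgradμ x (hΩUt hx) i]
      ring
    have e7 : (∫ x in Set.Icc a b, ψ (t, x) * S x)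
        = ∫ x in Set.Icc a b, μ t x * S x := by
      refine MeasureTheory.setIntegral_congr_fun measurableSet_Icc fun x hx => ?_
      rw [hμψ x (hΩUt hx)]
    rw [e1, e2, show (∫ x in Set.Icc a b, (φ (t, x)^3 - φ (t, x)) * pt φ (t, x))
        + ε^2 * -(∫ x in Set.Icc a b, pt φ (t, x) * ∑ i, px (px φ i) i (t, x))
      = (∫ x in Set.Icc a b, (φ (t, x)^3 - φ (t, x)) * pt φ (t, x))
        - ε^2 * (∫ x in Set.Icc a b, pt φ (t, x) * ∑ i, px (px φ i) i (t, x)) from by ring,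
      e3, e4, e5, e6, e7]
  rw [key] at hder
  exact hder
end

section
/- Let M_DG be a symmetric real n × n matrix, M_div a symmetric positive definite real m × m matrix, D a real n × m matrix, ε ∈ ℝ, s ∈ ℝⁿ, and G : ℝⁿ → ℝ differentiable. Let φ : ℝ → ℝⁿ be differentiable, define σ(t) = −M_div⁻¹ Dᵀ φ(t), and let j : ℝ → ℝᵐ, μ : ℝ → ℝⁿ and a family of symmetric positive semidefinite m × m matrices W(t) satisfy, for all t: (i) M_DG φ'(t) = s − D j(t); (ii) W(t) j(t) = Dᵀ μ(t); (iii) M_DG μ(t) = ∇G(φ(t)) − ε² D σ(t). Then the discrete energy H(t) = G(φ(t)) + (ε²/2) ⟨σ(t), M_div σ(t)⟩ is differentiable with H'(t) = ⟨μ(t), s⟩ − ⟨j(t), W(t) j(t)⟩ ≤ ⟨μ(t), s⟩ for all t; in particular, if s = 0 then H is nonincreasing. (Algebraic form of Proposition 1: the mixed DG semidiscretization of the Cahn–Hilliard equation dissipates the discrete energy H_DG, with rate −‖j_h/√(d(φ_h))‖², up to the forcing term.) -/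
/-!
Along the flow, `H' = ⟨∇G(φ), φ'⟩ + ε² ⟨σ', M_div σ⟩`. Since `σ' = -M_div⁻¹ Dᵀ φ'` and `M_div`
is symmetric, the second term is `-ε² ⟨Dσ, φ'⟩`, so by (iii) `H' = ⟨M_DG μ, φ'⟩`. Symmetry of
`M_DG` and (i) turn this into `⟨μ, s⟩ - ⟨Dᵀμ, j⟩`, and by (ii) the last term is `⟨j, W j⟩ ≥ 0`.
-/

open Matrix

namespace Matrix

variable {ι κ : Type*} [Fintype ι] [Fintype κ]

theorem IsSymm.dotProduct_mulVec_comm {R : Type*} [CommSemiring R] {M : Matrix ι ι R}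
    (hM : M.IsSymm) (x y : ι → R) : x ⬝ᵥ M *ᵥ y = y ⬝ᵥ M *ᵥ x := by
  rw [dotProduct_mulVec, ← mulVec_transpose, hM.eq, dotProduct_comm]

theorem IsSymm.inv_mulVec_dotProduct_mulVec {K : Type*} [Field K] [DecidableEq ι]
    {M : Matrix ι ι K} (hM : M.IsSymm) (hdet : IsUnit M.det) (x y : ι → K) :
    (M⁻¹ *ᵥ x) ⬝ᵥ M *ᵥ y = x ⬝ᵥ y := by
  rw [hM.dotProduct_mulVec_comm, dotProduct_comm, mulVec_mulVec, mul_nonsing_inv _ hdet,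
    one_mulVec]

theorem IsSymm.mulVec_dotProduct_eq_of_mixedSystem {R : Type*} [CommRing R]
    {M : Matrix ι ι R} (hM : M.IsSymm) (D : Matrix ι κ R) (W : Matrix κ κ R)
    {p s μ : ι → R} {j : κ → R} (h1 : M *ᵥ p = s - D *ᵥ j) (h2 : W *ᵥ j = Dᵀ *ᵥ μ) :
    (M *ᵥ μ) ⬝ᵥ p = μ ⬝ᵥ s - j ⬝ᵥ W *ᵥ j := by
  rw [dotProduct_comm, hM.dotProduct_mulVec_comm, h1, dotProduct_sub, h2, mulVec_transpose,
    dotProduct_comm j, dotProduct_mulVec]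

end Matrix

section Derivatives

variable {ι κ : Type*} [Fintype ι] [Fintype κ] {t : ℝ}

theorem HasDerivAt.mulVec (A : Matrix ι κ ℝ) {f : ℝ → κ → ℝ} {f' : κ → ℝ}
    (hf : HasDerivAt f f' t) : HasDerivAt (fun τ => A *ᵥ f τ) (A *ᵥ f') t :=
  (Matrix.mulVecLin A).toContinuousLinearMap.hasFDerivAt.comp_hasDerivAt t hf

theorem HasDerivAt.dotProduct {f g : ℝ → ι → ℝ} {f' g' : ι → ℝ}
    (hf : HasDerivAt f f' t) (hg : HasDerivAt g g' t) :
    HasDerivAt (fun τ => f τ ⬝ᵥ g τ) (f' ⬝ᵥ g t + f t ⬝ᵥ g') t := by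
  have := HasDerivAt.fun_sum fun i (_ : i ∈ Finset.univ) =>
    (hasDerivAt_pi.mp hf i).fun_mul (hasDerivAt_pi.mp hg i)
  rwa [_root_.dotProduct, _root_.dotProduct, ← Finset.sum_add_distrib]

theorem HasDerivAt.dotProduct_mulVec_self {M : Matrix ι ι ℝ} (hM : M.IsSymm)
    {f : ℝ → ι → ℝ} {f' : ι → ℝ} (hf : HasDerivAt f f' t) :
    HasDerivAt (fun τ => f τ ⬝ᵥ M *ᵥ f τ) (2 * (f' ⬝ᵥ M *ᵥ f t)) t := by
  convert hf.dotProduct (hf.mulVec M) using 1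
  rw [hM.dotProduct_mulVec_comm (f t), two_mul]

theorem ContinuousLinearMap.apply_eq_dotProduct [DecidableEq ι] (L : (ι → ℝ) →L[ℝ] ℝ)
    (v : ι → ℝ) : L v = (fun i => L (Pi.single i 1)) ⬝ᵥ v := by
  conv_lhs => rw [pi_eq_sum_univ' v, map_sum]
  simp [_root_.dotProduct, mul_comm]

end Derivatives

/-- **Energy dissipation for the mixed DG semidiscretization of Cahn–Hilliard
(Proposition 1, algebraic form).** Given (i) `M_DG φ' = s − D j`, (ii) `W j = Dᵀ μ`,
(iii) `M_DG μ = ∇G(φ) − ε² D σ` with `σ = −M_div⁻¹ Dᵀ φ`, `M_DG` symmetric,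
`M_div` symmetric positive definite and `W(t)` positive semidefinite, the discrete
energy `H = G(φ) + (ε²/2)⟨σ, M_div σ⟩` satisfies
`H'(t) = ⟨μ, s⟩ − ⟨j, W j⟩ ≤ ⟨μ, s⟩`; if `s = 0` then `H` is nonincreasing. -/
theorem stmt_9 (n m : ℕ)
    (MDG : Matrix (Fin n) (Fin n) ℝ) (hMDG : MDG.IsSymm)
    (Mdiv : Matrix (Fin m) (Fin m) ℝ) (hMdiv : Mdiv.PosDef)
    (D : Matrix (Fin n) (Fin m) ℝ) (ε : ℝ) (s : Fin n → ℝ)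
    (G : (Fin n → ℝ) → ℝ) (hG : Differentiable ℝ G)
    (φ : ℝ → Fin n → ℝ) (hφ : Differentiable ℝ φ)
    (σ : ℝ → Fin m → ℝ) (hσ : ∀ t, σ t = -(Mdiv⁻¹ *ᵥ (Dᵀ *ᵥ φ t)))
    (j : ℝ → Fin m → ℝ) (μ : ℝ → Fin n → ℝ)
    (W : ℝ → Matrix (Fin m) (Fin m) ℝ) (hW : ∀ t, (W t).PosSemidef)
    (h1 : ∀ t, MDG *ᵥ deriv φ t = s - D *ᵥ j t)
    (h2 : ∀ t, W t *ᵥ j t = Dᵀ *ᵥ μ t)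
    (h3 : ∀ t, MDG *ᵥ μ t
      = (fun i => fderiv ℝ G (φ t) (Pi.single i 1)) - ε^2 • (D *ᵥ σ t)) :
    (∀ t : ℝ,
      HasDerivAt (fun τ => G (φ τ) + ε^2/2 * dotProduct (σ τ) (Mdiv *ᵥ σ τ))
        (dotProduct (μ t) s - dotProduct (j t) (W t *ᵥ j t)) t
      ∧ dotProduct (μ t) s - dotProduct (j t) (W t *ᵥ j t) ≤ dotProduct (μ t) s)
    ∧ (s = 0 →
        Antitone (fun t => G (φ t) + ε^2/2 * dotProduct (σ t) (Mdiv *ᵥ σ t))) := by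
  have hMdiv_symm : Mdiv.IsSymm := isHermitian_iff_isSymm.mp hMdiv.isHermitian
  have hMdiv_det : IsUnit Mdiv.det := (isUnit_iff_isUnit_det Mdiv).mp hMdiv.isUnit
  have hderiv : ∀ t, HasDerivAt (fun τ => G (φ τ) + ε^2/2 * σ τ ⬝ᵥ Mdiv *ᵥ σ τ)
      (μ t ⬝ᵥ s - j t ⬝ᵥ W t *ᵥ j t) t := by
    intro t
    have hφ' := (hφ t).hasDerivAt
    have hσ' : HasDerivAt σ (-(Mdiv⁻¹ *ᵥ (Dᵀ *ᵥ deriv φ t))) t := by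
      rw [funext hσ]; exact ((hφ'.mulVec Dᵀ).mulVec Mdiv⁻¹).neg
    have hσ'_Mdiv : -(Mdiv⁻¹ *ᵥ (Dᵀ *ᵥ deriv φ t)) ⬝ᵥ Mdiv *ᵥ σ t
        = -((D *ᵥ σ t) ⬝ᵥ deriv φ t) := by
      rw [neg_dotProduct, hMdiv_symm.inv_mulVec_dotProduct_mulVec hMdiv_det, mulVec_transpose,
        ← dotProduct_mulVec, dotProduct_comm]
    refine (((hG (φ t)).hasFDerivAt.comp_hasDerivAt t hφ').add
      ((hσ'.dotProduct_mulVec_self hMdiv_symm).const_mul (ε^2/2))).congr_deriv ?_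
    rw [← hMDG.mulVec_dotProduct_eq_of_mixedSystem D (W t) (h1 t) (h2 t), h3, hσ'_Mdiv,
      ContinuousLinearMap.apply_eq_dotProduct, sub_dotProduct, smul_dotProduct, smul_eq_mul]
    ring
  have hdiss : ∀ t, 0 ≤ j t ⬝ᵥ W t *ᵥ j t := fun t => (hW t).dotProduct_mulVec_nonneg (j t)
  refine ⟨fun t => ⟨hderiv t, sub_le_self _ (hdiss t)⟩, fun hs => ?_⟩
  subst hs
  exact antitone_of_hasDerivAt_nonpos hderiv fun t => by simpa using hdiss t
end
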